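/- Let 0 < r₁ < r₂, let 0 < ε < π/8, and define K: ℂ → ℝ by K(z) = −[ 4√π r₂ |z| / ( e^{((r₁+r₂)/2) Re(z²)} + e^{−((3r₂−r₁)/2) Re(z²)} )² ]². If θ ∈ [0, 2π) satisfies |cos(2θ)| ≥ sin(2ε) (equivalently θ lies outside the ε-neighborhoods of the angles (2i−1)π/4, i = 1,…,4), then for every t > 0 one has K(t e^{iθ}) > −A t² e^{−B t²}, where A = 16π r₂² and B = (r₁ + r₂) cos(π/2 − 2ε) = (r₁+r₂) sin(2ε). In particular K is bounded away from the four diagonal directions. -/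

import Mathlib

open Real Filter

/-- The Gaussian curvature of the complete minimal immersion `χ : ℂ → ℝ³` with
Weierstrass data `f(z) = (2/√π) e^{r₁ z²}`, `g(z) = e^{-r₂ z²}` (Example A.2). -/
noncomputable def gaussCurvWeierstrass (r₁ r₂ : ℝ) (z : ℂ) : ℝ :=
  -(4 * Real.sqrt π * r₂ * ‖z‖ /
      (Real.exp ((r₁ + r₂) / 2 * (z ^ 2).re) +
        Real.exp (-((3 * r₂ - r₁) / 2) * (z ^ 2).re)) ^ 2) ^ 2

/-!
On the ray `z = t e^{iθ}` the curvature is `-16π r₂² t² / D⁴` with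
`D = e^{a u} + e^{-b u}`, `u = t² cos 2θ`, `a = (r₁ + r₂)/2 ≤ b = (3r₂ - r₁)/2`.
Whatever the sign of `u`, one of the two exponentials is at least `e^{a |u|} ≥ 1`, so
`D⁴ ≥ D² > e^{2a|u|} ≥ e^{(r₁ + r₂) sin(2ε) t²}` as soon as `|cos 2θ| ≥ sin 2ε`.
-/

theorem Complex.re_sq_ofReal_mul_exp_mul_I (t θ : ℝ) :
    (((t : ℂ) * Complex.exp (θ * Complex.I)) ^ 2).re = t ^ 2 * Real.cos (2 * θ) := by
  have hsq : ((t : ℂ) * Complex.exp (θ * Complex.I)) ^ 2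
      = ((t ^ 2 : ℝ) : ℂ) * Complex.exp ((2 * θ : ℝ) * Complex.I) := by
    rw [mul_pow, ← Complex.exp_nat_mul]
    push_cast
    ring_nf
  rw [hsq, Complex.re_ofReal_mul, Complex.exp_ofReal_mul_I_re]

theorem gaussCurvWeierstrass_ofReal_mul_exp_mul_I (r₁ r₂ t θ : ℝ) (ht : 0 ≤ t) :
    gaussCurvWeierstrass r₁ r₂ (t * Complex.exp (θ * Complex.I)) =
      -(16 * π * r₂ ^ 2 * t ^ 2 /
        (Real.exp ((r₁ + r₂) / 2 * (t ^ 2 * Real.cos (2 * θ))) +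
          Real.exp (-((3 * r₂ - r₁) / 2) * (t ^ 2 * Real.cos (2 * θ)))) ^ 4) := by
  have hnorm : ‖(t : ℂ) * Complex.exp (θ * Complex.I)‖ = t := by
    rw [norm_mul, Complex.norm_exp_ofReal_mul_I, Complex.norm_real, Real.norm_of_nonneg ht,
      mul_one]
  rw [gaussCurvWeierstrass, hnorm, Complex.re_sq_ofReal_mul_exp_mul_I, div_pow,
    mul_pow, mul_pow, mul_pow, sq_sqrt pi_pos.le]
  ring

theorem exp_mul_abs_lt_exp_add_exp {a b : ℝ} (hab : a ≤ b) (u : ℝ) :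
    Real.exp (a * |u|) < Real.exp (a * u) + Real.exp (-b * u) := by
  rcases le_or_gt 0 u with hu | hu
  · rw [abs_of_nonneg hu]
    exact lt_add_of_pos_right _ (exp_pos _)
  · have hexp : Real.exp (a * |u|) ≤ Real.exp (-b * u) := by
      rw [abs_of_neg hu, exp_le_exp]
      nlinarith
    exact hexp.trans_lt (lt_add_of_pos_left _ (exp_pos _))

theorem exp_two_mul_lt_exp_add_exp_pow_four {a b s u : ℝ} (ha : 0 ≤ a) (hab : a ≤ b)
    (hs : s ≤ |u|) :
    Real.exp (2 * a * s) < (Real.exp (a * u) + Real.exp (-b * u)) ^ 4 := by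
  have hD := exp_mul_abs_lt_exp_add_exp hab u
  have hD1 : 1 ≤ Real.exp (a * u) + Real.exp (-b * u) :=
    (one_le_exp (mul_nonneg ha (abs_nonneg u))).trans hD.le
  calc Real.exp (2 * a * s) ≤ Real.exp (a * |u|) ^ 2 := by
        rw [← exp_nat_mul, exp_le_exp]
        push_cast
        nlinarith
    _ < (Real.exp (a * u) + Real.exp (-b * u)) ^ 2 :=
        pow_lt_pow_left₀ hD (exp_nonneg _) two_ne_zero
    _ ≤ (Real.exp (a * u) + Real.exp (-b * u)) ^ 4 := pow_le_pow_right₀ hD1 (by norm_num)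

theorem gaussCurv_bound_off_diagonal_general (r₁ r₂ ε : ℝ) (h1 : 0 < r₁) (h12 : r₁ < r₂)
    (θ : ℝ) (hcos : Real.sin (2 * ε) ≤ |Real.cos (2 * θ)|)
    (t : ℝ) (ht : 0 < t) :
    -(16 * π * r₂ ^ 2) * t ^ 2 *
        Real.exp (-((r₁ + r₂) * Real.cos (π / 2 - 2 * ε)) * t ^ 2) <
      gaussCurvWeierstrass r₁ r₂ (t * Complex.exp (θ * Complex.I)) := by
  set D := Real.exp ((r₁ + r₂) / 2 * (t ^ 2 * Real.cos (2 * θ))) +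
    Real.exp (-((3 * r₂ - r₁) / 2) * (t ^ 2 * Real.cos (2 * θ)))
  have hD : Real.exp ((r₁ + r₂) * Real.sin (2 * ε) * t ^ 2) < D ^ 4 := by
    have hs : Real.sin (2 * ε) * t ^ 2 ≤ |t ^ 2 * Real.cos (2 * θ)| := by
      rw [abs_mul, abs_of_nonneg (sq_nonneg t), mul_comm]
      exact mul_le_mul_of_nonneg_left hcos (sq_nonneg t)
    have key := exp_two_mul_lt_exp_add_exp_pow_four (a := (r₁ + r₂) / 2)
      (b := (3 * r₂ - r₁) / 2) (by linarith) (by linarith) hs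
    rwa [show 2 * ((r₁ + r₂) / 2) * (Real.sin (2 * ε) * t ^ 2)
      = (r₁ + r₂) * Real.sin (2 * ε) * t ^ 2 by ring] at key
  have hC : 0 < 16 * π * r₂ ^ 2 * t ^ 2 := by
    have : r₂ ≠ 0 := (h1.trans h12).ne'
    positivity
  have hlhs : -(16 * π * r₂ ^ 2) * t ^ 2 *
      Real.exp (-((r₁ + r₂) * Real.cos (π / 2 - 2 * ε)) * t ^ 2)
      = -(16 * π * r₂ ^ 2 * t ^ 2 / Real.exp ((r₁ + r₂) * Real.sin (2 * ε) * t ^ 2)) := by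
    rw [cos_pi_div_two_sub, neg_mul ((r₁ + r₂) * _), exp_neg]
    ring
  rw [hlhs, gaussCurvWeierstrass_ofReal_mul_exp_mul_I _ _ _ _ ht.le, neg_lt_neg_iff]
  exact div_lt_div_of_pos_left hC (exp_pos _) hD

/-- **Curvature decay away from the diagonal directions (Example A.2).**
Let `0 < r₁ < r₂` and `0 < ε < π/8`.  If `θ ∈ [0, 2π)` satisfies
`|cos(2θ)| ≥ sin(2ε)` (i.e. `θ` lies outside the `ε`-neighborhoods of the angles
`(2i-1)π/4`), then for every `t > 0`,
`K(t e^{iθ}) > -A t² e^{-B t²}` with `A = 16π r₂²` and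
`B = (r₁ + r₂) cos(π/2 - 2ε) = (r₁ + r₂) sin(2ε)`. -/
theorem gaussCurv_bound_off_diagonal (r₁ r₂ ε : ℝ) (h1 : 0 < r₁) (h12 : r₁ < r₂)
    (hε0 : 0 < ε) (hε : ε < π / 8)
    (θ : ℝ) (hθ : θ ∈ Set.Ico 0 (2 * π)) (hcos : Real.sin (2 * ε) ≤ |Real.cos (2 * θ)|)
    (t : ℝ) (ht : 0 < t) :
    -(16 * π * r₂ ^ 2) * t ^ 2 *
        Real.exp (-((r₁ + r₂) * Real.cos (π / 2 - 2 * ε)) * t ^ 2) <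
      gaussCurvWeierstrass r₁ r₂ (t * Complex.exp (θ * Complex.I)) :=
  gaussCurv_bound_off_diagonal_general r₁ r₂ ε h1 h12 θ hcos t ht
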